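/- For j in a finite set F, let φ_j(x) = ½xᵀA_jx + b_jᵀx + ½c_j with A_j a real symmetric d×d matrix, b_j ∈ ℝ^d, c_j ∈ ℝ, and let Q_j be the symmetric (d+1)×(d+1) matrix Q_j = ½ [ [c_j, b_jᵀ], [b_j, A_j] ]. Fix j ∈ F with F \ {j} nonempty. Then sup_{x ∈ ℝ^d} min_{j' ≠ j} (φ_j(x) − φ_{j'}(x)) / (1 + |x|²) = sup { min_{j' ≠ j} yᵀ(Q_j − Q_{j'})y : y ∈ ℝ^{d+1}, ‖y‖ = 1, y₁ ≠ 0 }. -/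

import Mathlib

/-- The quadratic form `v ↦ vᵀ M v` associated to a matrix `M`. -/
noncomputable def quadForm {n : ℕ} (M : Matrix (Fin n) (Fin n) ℝ)
    (v : EuclideanSpace ℝ (Fin n)) : ℝ :=
  ∑ i, ∑ j, v i * M i j * v j

/-- The quadratic basis function `φ(x) = ½xᵀAx + bᵀx + ½c`. -/
noncomputable def phiQuad {d : ℕ} (A : Matrix (Fin d) (Fin d) ℝ) (b : Fin d → ℝ) (c : ℝ)
    (x : EuclideanSpace ℝ (Fin d)) : ℝ :=
  (1 / 2) * quadForm A x + ∑ i, b i * x i + (1 / 2) * c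

/-- The homogenized symmetric `(d+1)×(d+1)` matrix `Q = ½ [[c, bᵀ], [b, A]]`. -/
noncomputable def Qmat {d : ℕ} (A : Matrix (Fin d) (Fin d) ℝ) (b : Fin d → ℝ) (c : ℝ) :
    Matrix (Fin (d + 1)) (Fin (d + 1)) ℝ :=
  Matrix.of fun i i' =>
    (1 / 2) *
      (Fin.cases (motive := fun _ => ℝ)
        (Fin.cases (motive := fun _ => ℝ) c (fun k' => b k') i')
        (fun k => Fin.cases (motive := fun _ => ℝ) (b k) (fun k' => A k k') i') i)

/-!
The substitution `y = (1, x) / √(1 + ‖x‖²)` turns `φ(x) / (1 + ‖x‖²)` into the quadratic form of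
`Q` at a unit vector with `y₀ ≠ 0`. Conversely every such `y` is `y₀ • (1, x)` for
`x = (y₁, …, y_d) / y₀`, and `‖y‖ = 1` forces `y₀² = 1 / (1 + ‖x‖²)`. So dehomogenization
`y ↦ x` maps the feasible set of the quadratic program onto `ℝ^d` and carries one objective
to the other; two suprema of the same set of values agree.
-/

lemma quadForm_sub {n : ℕ} (M M' : Matrix (Fin n) (Fin n) ℝ) (v : EuclideanSpace ℝ (Fin n)) :
    quadForm (M - M') v = quadForm M v - quadForm M' v := by
  simp only [quadForm, Matrix.sub_apply, mul_sub, sub_mul, Finset.sum_sub_distrib]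

lemma quadForm_smul {n : ℕ} (M : Matrix (Fin n) (Fin n) ℝ) (t : ℝ) (v : EuclideanSpace ℝ (Fin n)) :
    quadForm M (t • v) = t ^ 2 * quadForm M v := by
  simp only [quadForm, PiLp.smul_apply, smul_eq_mul, Finset.mul_sum]
  exact Finset.sum_congr rfl fun i _ => Finset.sum_congr rfl fun j _ => by ring

noncomputable def homogenize {d : ℕ} (x : EuclideanSpace ℝ (Fin d)) :
    EuclideanSpace ℝ (Fin (d + 1)) :=
  WithLp.toLp 2 (Fin.cons 1 x.ofLp)

noncomputable def dehomogenize {d : ℕ} (y : EuclideanSpace ℝ (Fin (d + 1))) :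
    EuclideanSpace ℝ (Fin d) :=
  WithLp.toLp 2 fun i => y i.succ / y 0

@[simp] lemma homogenize_zero {d : ℕ} (x : EuclideanSpace ℝ (Fin d)) : homogenize x 0 = 1 := rfl

@[simp] lemma homogenize_succ {d : ℕ} (x : EuclideanSpace ℝ (Fin d)) (i : Fin d) :
    homogenize x i.succ = x i := rfl

@[simp] lemma dehomogenize_apply {d : ℕ} (y : EuclideanSpace ℝ (Fin (d + 1))) (i : Fin d) :
    dehomogenize y i = y i.succ / y 0 := rfl

lemma quadForm_Qmat_homogenize {d : ℕ} (A : Matrix (Fin d) (Fin d) ℝ) (b : Fin d → ℝ) (c : ℝ)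
    (x : EuclideanSpace ℝ (Fin d)) :
    quadForm (Qmat A b c) (homogenize x) = phiQuad A b c x := by
  simp only [quadForm, Qmat, phiQuad, Fin.sum_univ_succ, homogenize_zero, homogenize_succ,
    Matrix.of_apply, Fin.cases_zero, Fin.cases_succ, Finset.sum_add_distrib, Finset.mul_sum]
  simp only [mul_one, one_mul, mul_comm (x _) (1 / 2 * b _)]
  ring_nf
  rw [← Finset.sum_mul]
  ring

lemma norm_homogenize_sq {d : ℕ} (x : EuclideanSpace ℝ (Fin d)) :
    ‖homogenize x‖ ^ 2 = 1 + ‖x‖ ^ 2 := by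
  simp [EuclideanSpace.real_norm_sq_eq, Fin.sum_univ_succ]

lemma dehomogenize_smul_homogenize {d : ℕ} {t : ℝ} (ht : t ≠ 0) (x : EuclideanSpace ℝ (Fin d)) :
    dehomogenize (t • homogenize x) = x := by
  ext i
  simp [ht]

lemma smul_homogenize_dehomogenize {d : ℕ} {y : EuclideanSpace ℝ (Fin (d + 1))} (hy : y 0 ≠ 0) :
    y 0 • homogenize (dehomogenize y) = y := by
  ext i
  refine Fin.cases ?_ (fun k => ?_) i
  · simp
  · simp [mul_div_cancel₀ _ hy]

lemma norm_sq_eq_of_ne_zero {d : ℕ} {y : EuclideanSpace ℝ (Fin (d + 1))} (hy : y 0 ≠ 0) :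
    ‖y‖ ^ 2 = y 0 ^ 2 * (1 + ‖dehomogenize y‖ ^ 2) := by
  conv_lhs => rw [← smul_homogenize_dehomogenize hy]
  rw [norm_smul, mul_pow, norm_homogenize_sq, Real.norm_eq_abs, sq_abs]

lemma quadForm_Qmat_of_ne_zero {d : ℕ} (A : Matrix (Fin d) (Fin d) ℝ) (b : Fin d → ℝ) (c : ℝ)
    {y : EuclideanSpace ℝ (Fin (d + 1))} (hy : y 0 ≠ 0) :
    quadForm (Qmat A b c) y = y 0 ^ 2 * phiQuad A b c (dehomogenize y) := by
  conv_lhs => rw [← smul_homogenize_dehomogenize hy]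
  rw [quadForm_smul, quadForm_Qmat_homogenize]

lemma quadForm_sub_Qmat_of_norm_eq_one {d : ℕ} (A A' : Matrix (Fin d) (Fin d) ℝ)
    (b b' : Fin d → ℝ) (c c' : ℝ) {y : EuclideanSpace ℝ (Fin (d + 1))} (hy1 : ‖y‖ = 1)
    (hy0 : y 0 ≠ 0) :
    quadForm (Qmat A b c - Qmat A' b' c') y =
      (phiQuad A b c (dehomogenize y) - phiQuad A' b' c' (dehomogenize y)) /
        (1 + ‖dehomogenize y‖ ^ 2) := by
  have hsq : y 0 ^ 2 = (1 + ‖dehomogenize y‖ ^ 2)⁻¹ :=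
    eq_inv_of_mul_eq_one_left (by rw [← norm_sq_eq_of_ne_zero hy0, hy1, one_pow])
  rw [quadForm_sub, quadForm_Qmat_of_ne_zero _ _ _ hy0, quadForm_Qmat_of_ne_zero _ _ _ hy0,
    ← mul_sub, hsq, inv_mul_eq_div]

lemma surjective_dehomogenize_unit {d : ℕ} :
    Function.Surjective fun y : {y : EuclideanSpace ℝ (Fin (d + 1)) // ‖y‖ = 1 ∧ y 0 ≠ 0} =>
      dehomogenize y.1 := by
  intro x
  have hr : 0 < √(1 + ‖x‖ ^ 2) := Real.sqrt_pos.mpr (by positivity)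
  have hnorm : ‖homogenize x‖ = √(1 + ‖x‖ ^ 2) := by
    rw [← norm_homogenize_sq, Real.sqrt_sq (norm_nonneg _)]
  refine ⟨⟨(√(1 + ‖x‖ ^ 2))⁻¹ • homogenize x, ?_, ?_⟩, dehomogenize_smul_homogenize ?_ x⟩
  · rw [norm_smul, hnorm, norm_inv, Real.norm_of_nonneg hr.le, inv_mul_cancel₀ hr.ne']
  · simp [hr.ne']
  · exact inv_ne_zero hr.ne'

theorem stmt14_general {d : ℕ} {ι : Type*} (A : ι → Matrix (Fin d) (Fin d) ℝ)
    (b : ι → Fin d → ℝ) (c : ι → ℝ) (j : ι) :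
    (⨆ x : EuclideanSpace ℝ (Fin d), ⨅ j' : {j' : ι // j' ≠ j},
        (phiQuad (A j) (b j) (c j) x - phiQuad (A j'.1) (b j'.1) (c j'.1) x) /
          (1 + ‖x‖ ^ 2)) =
    ⨆ y : {y : EuclideanSpace ℝ (Fin (d + 1)) // ‖y‖ = 1 ∧ y 0 ≠ 0},
      ⨅ j' : {j' : ι // j' ≠ j},
        quadForm (Qmat (A j) (b j) (c j) - Qmat (A j'.1) (b j'.1) (c j'.1)) y.1 := by
  -- `⨆` is `sSup` of the range, which a surjective reparametrization does not change.
  refine (congrArg sSup (surjective_dehomogenize_unit.range_comp _)).symm.trans ?_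
  exact iSup_congr fun y => iInf_congr fun _ =>
    (quadForm_sub_Qmat_of_norm_eq_one _ _ _ _ _ _ y.2.1 y.2.2).symm

/-- The normalized importance metric of the `j`-th quadratic basis function equals the
value of its homogenized quadratically constrained quadratic program. -/
theorem stmt14 {d : ℕ} {ι : Type*} [Fintype ι]
    (A : ι → Matrix (Fin d) (Fin d) ℝ) (hA : ∀ j, (A j).IsSymm)
    (b : ι → Fin d → ℝ) (c : ι → ℝ) (j : ι) (hnt : ∃ j' : ι, j' ≠ j) :
    (⨆ x : EuclideanSpace ℝ (Fin d), ⨅ j' : {j' : ι // j' ≠ j},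
        (phiQuad (A j) (b j) (c j) x - phiQuad (A j'.1) (b j'.1) (c j'.1) x) /
          (1 + ‖x‖ ^ 2)) =
    ⨆ y : {y : EuclideanSpace ℝ (Fin (d + 1)) // ‖y‖ = 1 ∧ y 0 ≠ 0},
      ⨅ j' : {j' : ι // j' ≠ j},
        quadForm (Qmat (A j) (b j) (c j) - Qmat (A j'.1) (b j'.1) (c j'.1)) y.1 :=
  stmt14_general A b c j
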